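/- arXiv:2102.03807 — 5 statements merged into one kernel-verified Lean document; each statement's English description precedes it below -/
import Mathlib

section
/- Let X be a real Hilbert space and let w, z ∈ X. If D ⊆ X satisfies ⟪z − x, w − x⟫ ≤ 0 for all x ∈ D and w, z ∈ D, then ‖w − z‖ = sup {‖y − x‖ : x, y ∈ D}; i.e., the pair w, z realizes the diameter of D. -/
open Set Metric
open scoped RealInnerProductSpace

theorem stmt2 {X : Type*} [NormedAddCommGroup X] [InnerProductSpace ℝ X] [CompleteSpace X]
    (w z : X) (D : Set X) (hD : ∀ x ∈ D, ⟪z - x, w - x⟫ ≤ 0)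
    (hw : w ∈ D) (hz : z ∈ D) :
    ‖w - z‖ = Metric.diam D := by
  set m : X := (2:ℝ)⁻¹ • (w + z) with hm
  have hsub : D ⊆ Metric.closedBall m (‖w - z‖ / 2) := by
    intro x hx
    have key : ‖x - m‖ ^ 2 - (‖w - z‖ / 2) ^ 2 = ⟪z - x, w - x⟫ := by
      have h1 : ‖x - m‖ ^ 2 = ⟪x - m, x - m⟫ := (real_inner_self_eq_norm_sq _).symm
      have h2 : ‖w - z‖ ^ 2 = ⟪w - z, w - z⟫ := (real_inner_self_eq_norm_sq _).symm
      rw [h1]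
      have h3 : (‖w - z‖ / 2) ^ 2 = ⟪w - z, w - z⟫ / 4 := by rw [div_pow, h2]; ring
      rw [h3, hm]
      simp only [inner_sub_left, inner_sub_right, inner_add_left, inner_add_right,
        real_inner_smul_left, real_inner_smul_right, real_inner_comm x z,
        real_inner_comm x w, real_inner_comm z w]
      ring
    have hle : ‖x - m‖ ^ 2 ≤ (‖w - z‖ / 2) ^ 2 := by
      have := hD x hx
      linarith [key]
    have h0 : (0:ℝ) ≤ ‖w - z‖ / 2 := by positivity
    have : ‖x - m‖ ≤ ‖w - z‖ / 2 := by nlinarith [norm_nonneg (x - m)]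
    simpa [Metric.mem_closedBall, dist_eq_norm] using this
  have hbdd : Bornology.IsBounded D :=
    (Metric.isBounded_closedBall).subset hsub
  apply le_antisymm
  · have := Metric.dist_le_diam_of_mem hbdd hw hz
    simpa [dist_eq_norm] using this
  · have h1 : Metric.diam D ≤ Metric.diam (Metric.closedBall m (‖w - z‖ / 2)) :=
      Metric.diam_mono hsub Metric.isBounded_closedBall
    have h2 : Metric.diam (Metric.closedBall m (‖w - z‖ / 2)) ≤ 2 * (‖w - z‖ / 2) :=
      Metric.diam_closedBall (by positivity)
    linarith
end

section
/- Let X be a real Hilbert space, w, z ∈ X, D ⊆ X a set with ⟪z − x, w − x⟫ ≤ 0 for all x ∈ D, and D̂ = {x ∈ D : ‖x − w‖² ≥ r} with 0 < r < ‖w − z‖². Let F : D̂ → X satisfy ⟪F(x), w − x⟫ ≤ 0 on D̂, and let x : [t₀, ∞) → D̂ be C¹ with ẋ(t) = F(x(t)). If there exists an increasing sequence tₙ → ∞ with x(tₙ) → z strongly, then x(t) → z strongly as t → ∞. -/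
/-! Along the trajectory `‖x t - w‖²` is nondecreasing, its derivative being
`2⟪F (x t), x t - w⟫ ≥ 0`. The obtuse-angle condition on `D` gives
`‖x t - z‖² ≤ ‖w - z‖² - ‖x t - w‖²`, so the right-hand side is a nonincreasing, nonnegative
function of `t`; it tends to `0` along `tₙ`, hence along all `t`, and squeezes `‖x t - z‖`. -/

open Set Filter
open scoped RealInnerProductSpace Topology

theorem tendsto_of_antitoneOn_Ici_of_tendsto_comp {α β ι : Type*} [Preorder α]
    [LinearOrder β] [TopologicalSpace β] [OrderTopology β] {f : α → β} {a : α} {l : β}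
    (hf : AntitoneOn f (Ici a)) (hl : ∀ t ∈ Ici a, l ≤ f t) {p : Filter ι} [p.NeBot]
    {s : ι → α} (hs : ∀ n, a ≤ s n) (hfs : Tendsto (f ∘ s) p (𝓝 l)) :
    Tendsto f atTop (𝓝 l) := by
  refine tendsto_order.2 ⟨fun b hb => ?_, fun b hb => ?_⟩
  · filter_upwards [eventually_ge_atTop a] with t ht using hb.trans_le (hl t ht)
  · obtain ⟨n, hn⟩ := (hfs.eventually (eventually_lt_nhds hb)).exists
    filter_upwards [eventually_ge_atTop (s n)] with t ht
    exact (hf (hs n) ((hs n).trans ht) ht).trans_lt hn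

theorem norm_sub_sq_le_sub_of_inner_nonpos {E : Type*} [NormedAddCommGroup E]
    [InnerProductSpace ℝ E] {x w z : E} (h : ⟪z - x, w - x⟫ ≤ 0) :
    ‖x - z‖ ^ 2 ≤ ‖w - z‖ ^ 2 - ‖x - w‖ ^ 2 := by
  have hexpand := norm_sub_sq_real (w - x) (z - x)
  rw [sub_sub_sub_cancel_right] at hexpand
  rw [norm_sub_rev x z, norm_sub_rev x w, hexpand, real_inner_comm]
  linarith

theorem monotoneOn_norm_sub_sq_of_inner_deriv_nonpos {E : Type*} [NormedAddCommGroup E]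
    [InnerProductSpace ℝ E] {s : Set ℝ} (hs : Convex ℝ s) {x x' : ℝ → E} {w : E}
    (hx : ∀ t ∈ s, HasDerivAt x (x' t) t) (hx' : ∀ t ∈ s, ⟪x' t, w - x t⟫ ≤ 0) :
    MonotoneOn (fun t => ‖x t - w‖ ^ 2) s := by
  have hderiv : ∀ t ∈ s, HasDerivAt (fun t => ‖x t - w‖ ^ 2) (2 * ⟪x t - w, x' t⟫) t :=
    fun t ht => ((hx t ht).sub_const w).norm_sq
  refine monotoneOn_of_hasDerivWithinAt_nonneg hs
    (fun t ht => (hderiv t ht).continuousAt.continuousWithinAt)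
    (fun t ht => (hderiv t (interior_subset ht)).hasDerivWithinAt) fun t ht => ?_
  have hsign := hx' t (interior_subset ht)
  rw [real_inner_comm, ← neg_sub w, inner_neg_right]
  linarith

theorem stmt9_general {X : Type*} [NormedAddCommGroup X] [InnerProductSpace ℝ X]
    (w z : X) (D : Set X) (hD : ∀ x ∈ D, ⟪z - x, w - x⟫ ≤ 0)
    (r : ℝ)
    (F : X → X)
    (hF : ∀ y, y ∈ D → r ≤ ‖y - w‖ ^ 2 → ⟪F y, w - y⟫ ≤ 0)
    (t₀ : ℝ) (x : ℝ → X)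
    (hmem : ∀ t ∈ Ici t₀, x t ∈ D ∧ r ≤ ‖x t - w‖ ^ 2)
    (hderiv : ∀ t ∈ Ici t₀, HasDerivAt x (F (x t)) t)
    (tn : ℕ → ℝ) (htn₀ : ∀ n, t₀ ≤ tn n)
    (hconv : Tendsto (fun n => x (tn n)) atTop (𝓝 z)) :
    Tendsto x atTop (𝓝 z) := by
  set gap : ℝ → ℝ := fun t => ‖w - z‖ ^ 2 - ‖x t - w‖ ^ 2
  have hdist : ∀ t ∈ Ici t₀, ‖x t - z‖ ^ 2 ≤ gap t := fun t ht =>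
    norm_sub_sq_le_sub_of_inner_nonpos (hD _ (hmem t ht).1)
  have hgap_anti : AntitoneOn gap (Ici t₀) := fun s hs t ht hst =>
    sub_le_sub_left (monotoneOn_norm_sub_sq_of_inner_deriv_nonpos (convex_Ici t₀) hderiv
      (fun t ht => hF _ (hmem t ht).1 (hmem t ht).2) hs ht hst) _
  have hgap_seq : Tendsto (gap ∘ tn) atTop (𝓝 0) := by
    have := ((hconv.sub_const w).norm.pow 2).const_sub (‖w - z‖ ^ 2)
    rwa [norm_sub_rev z w, sub_self] at this
  have hgap : Tendsto gap atTop (𝓝 0) :=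
    tendsto_of_antitoneOn_Ici_of_tendsto_comp hgap_anti
      (fun t ht => (sq_nonneg _).trans (hdist t ht)) htn₀ hgap_seq
  have hsq : Tendsto (fun t => ‖x t - z‖ ^ 2) atTop (𝓝 0) :=
    squeeze_zero' (Eventually.of_forall fun _ => sq_nonneg _)
      (eventually_ge_atTop t₀ |>.mono hdist) hgap
  rw [tendsto_iff_norm_sub_tendsto_zero]
  simpa using hsq.sqrt

theorem stmt9 {X : Type*} [NormedAddCommGroup X] [InnerProductSpace ℝ X] [CompleteSpace X]
    (w z : X) (D : Set X) (hD : ∀ x ∈ D, ⟪z - x, w - x⟫ ≤ 0)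
    (r : ℝ) (hr : 0 < r) (hr' : r < ‖w - z‖ ^ 2)
    (F : X → X)
    (hF : ∀ y, y ∈ D → r ≤ ‖y - w‖ ^ 2 → ⟪F y, w - y⟫ ≤ 0)
    (t₀ : ℝ) (x : ℝ → X)
    (hmem : ∀ t ∈ Ici t₀, x t ∈ D ∧ r ≤ ‖x t - w‖ ^ 2)
    (hderiv : ∀ t ∈ Ici t₀, HasDerivAt x (F (x t)) t)
    (hC1 : ContinuousOn (fun t => F (x t)) (Ici t₀))
    (tn : ℕ → ℝ) (htn₀ : ∀ n, t₀ ≤ tn n) (htnmono : StrictMono tn)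
    (htn : Tendsto tn atTop atTop)
    (hconv : Tendsto (fun n => x (tn n)) atTop (𝓝 z)) :
    Tendsto x atTop (𝓝 z) :=
  stmt9_general w z D hD r F hF t₀ x hmem hderiv tn htn₀ hconv
end

section
/- Let X be a real Hilbert space, w, z ∈ X, and D ⊆ X with ⟪z − x, w − x⟫ ≤ 0 for all x ∈ D. Let x : [t₀, ∞) → D be a curve such that t ↦ ‖x(t) − w‖² is nondecreasing, and suppose that for every increasing sequence tₙ → ∞, weak convergence x(tₙ) ⇀ x̃ implies x̃ = z. Then x(t) → z strongly as t → ∞. -/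
/-!
On `D` the hypothesis reads `‖x - w‖² + ‖x - z‖² ≤ ‖w - z‖²`, so `‖x t - w‖²` increases to a
limit `L ≤ ‖w - z‖²` and the curve is bounded. A bounded curve has a weakly convergent sequence
`x (tₙ)` with `tₙ → ∞`, whose weak limit must be `z`; weak lower semicontinuity of the norm then
gives `‖z - w‖² ≤ L`. Hence `L = ‖w - z‖²` and `‖x t - z‖² ≤ ‖w - z‖² - ‖x t - w‖² → 0`.
-/

open Set Metric Filter Submodule
open scoped RealInnerProductSpace Topology

theorem exists_strictMono_weak_tendsto {X : Type*} [NormedAddCommGroup X]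
    [InnerProductSpace ℝ X] [CompleteSpace X] {u : ℕ → X} (hu : Bornology.IsBounded (range u)) :
    ∃ φ : ℕ → ℕ, StrictMono φ ∧ ∃ a : X,
      ∀ y, Tendsto (fun n => ⟪u (φ n), y⟫) atTop (𝓝 ⟪a, y⟫) := by
  obtain ⟨M, hM⟩ := isBounded_iff_forall_norm_le.mp hu
  -- Sequential Banach–Alaoglu needs a separable space, so work in the closed span `K` of the
  -- sequence; pairing with `y` only sees the orthogonal projection of `y` onto `K`.
  set K := (span ℝ (range u)).topologicalClosure
  have : TopologicalSpace.SeparableSpace K :=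
    ((countable_range u).isSeparable.span.closure).separableSpace
  have hmem (n : ℕ) : u n ∈ K := le_topologicalClosure _ (subset_span (mem_range_self n))
  let ℓ (n : ℕ) : WeakDual ℝ K := InnerProductSpace.toDual ℝ K ⟨u n, hmem n⟩
  have hℓ (n : ℕ) : ℓ n ∈ WeakDual.toStrongDual ⁻¹' closedBall 0 M := by
    change (InnerProductSpace.toDual ℝ K ⟨u n, hmem n⟩ : StrongDual ℝ K) ∈ closedBall 0 M
    rw [mem_closedBall_zero_iff, LinearIsometryEquiv.norm_map]
    exact hM _ (mem_range_self n)
  obtain ⟨a, -, φ, hφ, hlim⟩ := WeakDual.isSeqCompact_closedBall (𝕜 := ℝ) (E := K) 0 M hℓ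
  refine ⟨φ, hφ, (InnerProductSpace.toDual ℝ K).symm (WeakDual.toStrongDual a), fun y => ?_⟩
  have := ((WeakDual.eval_continuous (K.orthogonalProjectionOnto y)).tendsto a).comp hlim
  convert this using 2 with n
  · exact (inner_orthogonalProjectionOnto_eq_of_mem_left (K := K) ⟨u (φ n), hmem _⟩ y).symm
  · rw [← inner_orthogonalProjectionOnto_eq_of_mem_left, InnerProductSpace.toDual_symm_apply]
    rfl

theorem norm_sub_sq_add_norm_sub_sq_le_of_inner_nonpos {X : Type*} [NormedAddCommGroup X]
    [InnerProductSpace ℝ X] {w z x : X} (h : ⟪z - x, w - x⟫ ≤ 0) :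
    ‖x - w‖ ^ 2 + ‖x - z‖ ^ 2 ≤ ‖w - z‖ ^ 2 := by
  have hexp : ‖w - z‖ ^ 2 = ‖w - x‖ ^ 2 - 2 * ⟪w - x, z - x⟫ + ‖z - x‖ ^ 2 := by
    rw [← norm_sub_sq_real, sub_sub_sub_cancel_right]
  rw [hexp, norm_sub_rev x w, norm_sub_rev x z, real_inner_comm]
  linarith

theorem sq_norm_le_of_weak_tendsto {X ι : Type*} [NormedAddCommGroup X] [InnerProductSpace ℝ X]
    {l : Filter ι} [l.NeBot] {u : ι → X} {a : X} {L : ℝ}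
    (hweak : ∀ y, Tendsto (fun n => ⟪u n, y⟫) l (𝓝 ⟪a, y⟫))
    (hnorm : Tendsto (fun n => ‖u n‖ ^ 2) l (𝓝 L)) : ‖a‖ ^ 2 ≤ L := by
  have h : ‖a‖ ^ 2 ≤ (L + ‖a‖ ^ 2) / 2 := by
    refine le_of_tendsto_of_tendsto' (by simpa only [real_inner_self_eq_norm_sq] using hweak a)
      ((hnorm.add_const _).div_const 2) fun n => ?_
    nlinarith [real_inner_le_norm (u n) a, sq_nonneg (‖u n‖ - ‖a‖)]
  linarith

theorem MonotoneOn.exists_tendsto_atTop_le {α : Type*} [LinearOrder α] {f : α → ℝ} {a : α}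
    {C : ℝ} (hf : MonotoneOn f (Ici a)) (hC : ∀ t ∈ Ici a, f t ≤ C) :
    ∃ L ≤ C, Tendsto f atTop (𝓝 L) := by
  have : Nonempty α := ⟨a⟩
  have hmono : Monotone fun t => f (max t a) := fun s t hst =>
    hf (le_max_right s a) (le_max_right t a) (max_le_max_right a hst)
  have hbdd : BddAbove (range fun t => f (max t a)) :=
    ⟨C, forall_mem_range.2 fun t => hC _ (le_max_right t a)⟩
  refine ⟨_, ciSup_le fun t => hC _ (le_max_right t a), (tendsto_atTop_ciSup hmono hbdd).congr' ?_⟩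
  filter_upwards [eventually_ge_atTop a] with t ht
  rw [max_eq_left ht]

theorem exists_weak_tendsto_of_isBounded_image_Ici {X : Type*} [NormedAddCommGroup X]
    [InnerProductSpace ℝ X] [CompleteSpace X] {x : ℝ → X} {t₀ : ℝ}
    (hx : Bornology.IsBounded (x '' Ici t₀)) :
    ∃ tn : ℕ → ℝ, StrictMono tn ∧ Tendsto tn atTop atTop ∧
      ∃ a : X, ∀ y, Tendsto (fun n => ⟪x (tn n), y⟫) atTop (𝓝 ⟪a, y⟫) := by
  have hu : Bornology.IsBounded (range fun n : ℕ => x (t₀ + n)) :=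
    hx.subset (range_subset_iff.2 fun n => mem_image_of_mem x (by simp))
  obtain ⟨φ, hφ, a, ha⟩ := exists_strictMono_weak_tendsto hu
  exact ⟨fun n => t₀ + φ n, (Nat.strictMono_cast.comp hφ).const_add t₀,
    tendsto_atTop_add_const_left _ _ (tendsto_natCast_atTop_atTop.comp hφ.tendsto_atTop), a, ha⟩

theorem tendsto_of_sq_norm_sub_le {α X : Type*} [SeminormedAddCommGroup X] {l : Filter α}
    {x : α → X} {z : X} {g : α → ℝ} (hg : Tendsto g l (𝓝 0))
    (h : ∀ᶠ t in l, ‖x t - z‖ ^ 2 ≤ g t) : Tendsto x l (𝓝 z) := by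
  have hsq : Tendsto (fun t => ‖x t - z‖ ^ 2) l (𝓝 0) :=
    tendsto_of_tendsto_of_tendsto_of_le_of_le' tendsto_const_nhds hg
      (Eventually.of_forall fun t => sq_nonneg _) h
  rw [tendsto_iff_norm_sub_tendsto_zero]
  simpa only [Real.sqrt_sq (norm_nonneg _), Real.sqrt_zero] using hsq.sqrt

theorem stmt10 {X : Type*} [NormedAddCommGroup X] [InnerProductSpace ℝ X] [CompleteSpace X]
    (w z : X) (D : Set X) (hD : ∀ x ∈ D, ⟪z - x, w - x⟫ ≤ 0)
    (t₀ : ℝ) (x : ℝ → X) (hmem : ∀ t ∈ Ici t₀, x t ∈ D)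
    (hmono : MonotoneOn (fun t => ‖x t - w‖ ^ 2) (Ici t₀))
    (hweak : ∀ tn : ℕ → ℝ, StrictMono tn → Tendsto tn atTop atTop →
      ∀ xtil : X,
        (∀ y : X, Tendsto (fun n => ⟪x (tn n), y⟫) atTop (𝓝 ⟪xtil, y⟫)) →
        xtil = z) :
    Tendsto x atTop (𝓝 z) := by
  have hkey (t : ℝ) (ht : t ∈ Ici t₀) : ‖x t - w‖ ^ 2 + ‖x t - z‖ ^ 2 ≤ ‖w - z‖ ^ 2 :=
    norm_sub_sq_add_norm_sub_sq_le_of_inner_nonpos (hD _ (hmem t ht))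
  obtain ⟨L, hLle, hL⟩ := hmono.exists_tendsto_atTop_le fun t ht =>
    le_of_add_le_of_nonneg_left (hkey t ht) (sq_nonneg _)
  have hbdd : Bornology.IsBounded (x '' Ici t₀) := by
    refine (isBounded_closedBall (x := z) (r := ‖w - z‖)).subset
      (image_subset_iff.2 fun t ht => ?_)
    rw [mem_preimage, mem_closedBall, dist_eq_norm,
      ← pow_le_pow_iff_left₀ (norm_nonneg _) (norm_nonneg _) two_ne_zero]
    linarith [hkey t ht, sq_nonneg ‖x t - w‖]
  obtain ⟨tn, htn_mono, htn, a, ha⟩ := exists_weak_tendsto_of_isBounded_image_Ici hbdd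
  obtain rfl : a = z := hweak tn htn_mono htn a ha
  have hLge : ‖a - w‖ ^ 2 ≤ L :=
    sq_norm_le_of_weak_tendsto (u := fun n => x (tn n) - w)
      (fun y => by simpa only [inner_sub_left] using (ha y).sub_const ⟪w, y⟫) (hL.comp htn)
  have hLeq : L = ‖w - a‖ ^ 2 := le_antisymm hLle (by rwa [norm_sub_rev])
  refine tendsto_of_sq_norm_sub_le (g := fun t => L - ‖x t - w‖ ^ 2) ?_ ?_
  · simpa only [sub_self] using hL.const_sub L
  · filter_upwards [eventually_ge_atTop t₀] with t ht
    linarith [hkey t ht, hLeq]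
end

section
/- Let X be a real Hilbert space, w, z ∈ X with w ≠ z, and let D = closed ball centered at (w+z)/2 with radius ‖w−z‖/2, D̂ = {x ∈ D : ‖x − w‖² ≥ r} for some 0 < r < ‖w − z‖². Let G : D̂ → X satisfy ⟪G(x) − x, w − x⟫ ≤ 0 and G(x) ∈ D for all x ∈ D̂. Then for every x ∈ D̂ and every h ∈ [0, 1], the point (1−h)x + hG(x) belongs to D̂; in particular G(x) ∈ D̂. -/
open Set Metric
open scoped RealInnerProductSpace

theorem stmt17 {X : Type*} [NormedAddCommGroup X] [InnerProductSpace ℝ X] [CompleteSpace X]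
    (w z : X) (hwz : w ≠ z) (r : ℝ) (hr : 0 < r) (hr' : r < ‖w - z‖ ^ 2)
    (G : X → X)
    (hG1 : ∀ x, x ∈ Metric.closedBall (midpoint ℝ w z) (‖w - z‖ / 2) →
      r ≤ ‖x - w‖ ^ 2 → ⟪G x - x, w - x⟫ ≤ 0)
    (hG2 : ∀ x, x ∈ Metric.closedBall (midpoint ℝ w z) (‖w - z‖ / 2) →
      r ≤ ‖x - w‖ ^ 2 → G x ∈ Metric.closedBall (midpoint ℝ w z) (‖w - z‖ / 2)) :
    ∀ x, x ∈ Metric.closedBall (midpoint ℝ w z) (‖w - z‖ / 2) → r ≤ ‖x - w‖ ^ 2 →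
      (∀ h ∈ Icc (0:ℝ) 1,
        (1 - h) • x + h • G x ∈ Metric.closedBall (midpoint ℝ w z) (‖w - z‖ / 2) ∧
        r ≤ ‖(1 - h) • x + h • G x - w‖ ^ 2) ∧
      (G x ∈ Metric.closedBall (midpoint ℝ w z) (‖w - z‖ / 2) ∧ r ≤ ‖G x - w‖ ^ 2) := by
  intro x hx hxr
  have key : ∀ h ∈ Icc (0:ℝ) 1,
      (1 - h) • x + h • G x ∈ Metric.closedBall (midpoint ℝ w z) (‖w - z‖ / 2) ∧
      r ≤ ‖(1 - h) • x + h • G x - w‖ ^ 2 := by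
    intro h hh
    obtain ⟨h0, h1⟩ := hh
    constructor
    · exact (convex_closedBall _ _) hx (hG2 x hx hxr) (by linarith) h0 (by ring)
    · have heq : (1 - h) • x + h • G x - w = (x - w) + h • (G x - x) := by
        module
      rw [heq, norm_add_sq_real]
      have hinner : ⟪x - w, h • (G x - x)⟫ = h * (-⟪G x - x, w - x⟫) := by
        rw [real_inner_smul_right, real_inner_comm]
        rw [show w - x = -(x - w) by abel, inner_neg_right]
        ring
      have h2 := hG1 x hx hxr
      have : 0 ≤ 2 * ⟪x - w, h • (G x - x)⟫ := by
        rw [hinner]; nlinarith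
      nlinarith [sq_nonneg ‖h • (G x - x)‖]
  refine ⟨key, ?_, ?_⟩
  · exact hG2 x hx hxr
  · have := (key 1 ⟨zero_le_one, le_refl 1⟩).2
    simpa using this
end

section
/- Let X be a real Hilbert space and T : X → X firmly quasinonexpansive with w ∉ Fix T, Fix T nonempty closed convex, and z = P_{Fix T}(w). Define C(x) := H(w, x) ∩ H(x, Tx), where H(z₁, z₂) = {h : ⟪h − z₂, z₁ − z₂⟫ ≤ 0}. Then for every x in the closed ball D centered at (w+z)/2 with radius ‖w−z‖/2: (i) z ∈ C(x); (ii) C(x) is closed and convex; (iii) P_{C(x)}(w) ∈ D; (iv) ⟪P_{C(x)}(w) − x, w − x⟫ ≤ 0. -/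
open Set Metric
open scoped RealInnerProductSpace

/-- Ball membership characterization via inner product. -/
lemma ball_inner_iff {X : Type*} [NormedAddCommGroup X] [InnerProductSpace ℝ X]
    (w z x : X) :
    x ∈ Metric.closedBall (midpoint ℝ w z) (‖w - z‖ / 2) ↔ ⟪x - w, x - z⟫ ≤ 0 := by
  have key : ⟪x - w, x - z⟫ = ‖x - midpoint ℝ w z‖ ^ 2 - (‖w - z‖ / 2) ^ 2 := by
    have hb : x - midpoint ℝ w z = ((1:ℝ)/2) • ((x - w) + (x - z)) := by
      rw [midpoint_eq_smul_add, invOf_eq_inv]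
      rw [smul_add, smul_add]
      rw [show ((2:ℝ)⁻¹ : ℝ) = 1/2 by norm_num]
      module
    have h1 : ‖w - z‖ ^ 2 = ‖x - z‖ ^ 2 - 2 * ⟪x - z, x - w⟫ + ‖x - w‖ ^ 2 := by
      have := norm_sub_sq_real (x - z) (x - w)
      rw [show (x - z) - (x - w) = w - z by abel] at this
      linarith
    have h2 : ‖x - midpoint ℝ w z‖ ^ 2 = (1/2 : ℝ)^2 * ‖(x - w) + (x - z)‖ ^ 2 := by
      rw [hb, norm_smul]
      simp [mul_pow]
    have h3 : ‖(x - w) + (x - z)‖ ^ 2 = ‖x - w‖ ^ 2 + 2 * ⟪x - w, x - z⟫ + ‖x - z‖ ^ 2 :=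
      norm_add_sq_real _ _
    have hc : ⟪x - z, x - w⟫ = ⟪x - w, x - z⟫ := real_inner_comm _ _
    nlinarith [h1, h2, h3, hc]
  rw [Metric.mem_closedBall, dist_eq_norm, key]
  constructor
  · intro h
    nlinarith [norm_nonneg (x - midpoint ℝ w z), norm_nonneg (w - z)]
  · intro h
    nlinarith [norm_nonneg (x - midpoint ℝ w z), norm_nonneg (w - z),
      div_nonneg (norm_nonneg (w - z)) (by norm_num : (0:ℝ) ≤ 2)]

lemma halfspace_closed {X : Type*} [NormedAddCommGroup X] [InnerProductSpace ℝ X]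
    (a b : X) : IsClosed {h : X | ⟪h - a, b⟫ ≤ 0} :=
  isClosed_le (Continuous.inner (continuous_id.sub continuous_const) continuous_const)
    continuous_const

lemma halfspace_convex {X : Type*} [NormedAddCommGroup X] [InnerProductSpace ℝ X]
    (a b : X) : Convex ℝ {h : X | ⟪h - a, b⟫ ≤ 0} := by
  have hs : {h : X | ⟪h - a, b⟫ ≤ 0} = {h : X | ⟪h, b⟫ ≤ ⟪a, b⟫} := by
    ext h
    simp [inner_sub_left, sub_nonpos]
  rw [hs]
  exact convex_halfSpace_le
    ⟨fun u v => inner_add_left u v b, fun c u => real_inner_smul_left u b c⟩ _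

theorem stmt18 {X : Type*} [NormedAddCommGroup X] [InnerProductSpace ℝ X] [CompleteSpace X]
    (T : X → X)
    (hT : ∀ x : X, ∀ y : X, T y = y → ‖T x - y‖ ^ 2 + ‖T x - x‖ ^ 2 ≤ ‖x - y‖ ^ 2)
    (w : X) (hw : T w ≠ w)
    (z : X) (hz : T z = z) (hzproj : ∀ y : X, T y = y → ‖w - z‖ ≤ ‖w - y‖) :
    ∀ x ∈ Metric.closedBall (midpoint ℝ w z) (‖w - z‖ / 2),
      z ∈ ({h : X | ⟪h - x, w - x⟫ ≤ 0} ∩ {h : X | ⟪h - T x, x - T x⟫ ≤ 0}) ∧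
      IsClosed ({h : X | ⟪h - x, w - x⟫ ≤ 0} ∩ {h : X | ⟪h - T x, x - T x⟫ ≤ 0}) ∧
      Convex ℝ ({h : X | ⟪h - x, w - x⟫ ≤ 0} ∩ {h : X | ⟪h - T x, x - T x⟫ ≤ 0}) ∧
      ∀ p ∈ ({h : X | ⟪h - x, w - x⟫ ≤ 0} ∩ {h : X | ⟪h - T x, x - T x⟫ ≤ 0}),
        (∀ y ∈ ({h : X | ⟪h - x, w - x⟫ ≤ 0} ∩ {h : X | ⟪h - T x, x - T x⟫ ≤ 0}),
          ‖w - p‖ ≤ ‖w - y‖) →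
        p ∈ Metric.closedBall (midpoint ℝ w z) (‖w - z‖ / 2) ∧
        ⟪p - x, w - x⟫ ≤ 0 := by
  intro x hx
  set C := ({h : X | ⟪h - x, w - x⟫ ≤ 0} ∩ {h : X | ⟪h - T x, x - T x⟫ ≤ 0}) with hC
  have hzC : z ∈ C := by
    constructor
    · -- z ∈ H(w,x)
      have hxb := (ball_inner_iff w z x).mp hx
      have : ⟪z - x, w - x⟫ = ⟪x - w, x - z⟫ := by
        rw [← neg_sub x z, ← neg_sub x w, inner_neg_neg, real_inner_comm]
      simpa [Set.mem_setOf_eq, this] using hxb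
    · -- z ∈ H(x, Tx)
      have hq := hT x z hz
      have e : ‖(z - T x) - (x - T x)‖ ^ 2
          = ‖z - T x‖ ^ 2 - 2 * ⟪z - T x, x - T x⟫ + ‖x - T x‖ ^ 2 :=
        norm_sub_sq_real _ _
      have e2 : (z - T x) - (x - T x) = z - x := by abel
      rw [e2] at e
      have n1 : ‖T x - z‖ = ‖z - T x‖ := norm_sub_rev _ _
      have n2 : ‖T x - x‖ = ‖x - T x‖ := norm_sub_rev _ _
      have n3 : ‖x - z‖ = ‖z - x‖ := norm_sub_rev _ _
      rw [n1, n2, n3] at hq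
      simp only [Set.mem_setOf_eq]
      nlinarith
  have hclosed : IsClosed C := (halfspace_closed x (w - x)).inter (halfspace_closed (T x) (x - T x))
  have hconv : Convex ℝ C := (halfspace_convex x (w - x)).inter (halfspace_convex (T x) (x - T x))
  refine ⟨hzC, hclosed, hconv, ?_⟩
  intro p hp hmin
  refine ⟨?_, hp.1⟩
  -- p is the projection of w onto C, hence ⟪w - p, z - p⟫ ≤ 0
  have hbdd : BddBelow (Set.range fun y : C => ‖w - (y : X)‖) := by
    refine ⟨0, ?_⟩
    rintro r ⟨y, rfl⟩
    positivity
  haveI : Nonempty C := ⟨⟨p, hp⟩⟩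
  have hiInf : ‖w - p‖ = ⨅ y : C, ‖w - (y : X)‖ := by
    refine le_antisymm (le_ciInf fun y => hmin y y.2) (ciInf_le hbdd ⟨p, hp⟩)
  have hvar := (norm_eq_iInf_iff_real_inner_le_zero hconv hp).mp hiInf z hzC
  have : ⟪p - w, p - z⟫ ≤ 0 := by
    have : ⟪p - w, p - z⟫ = ⟪w - p, z - p⟫ := by
      rw [← neg_sub w p, ← neg_sub z p, inner_neg_neg]
    linarith [hvar, this.le, this.ge]
  exact (ball_inner_iff w z p).mpr this
end
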